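/- Under assumptions (B1)–(B6), the set A is a convex, closed, and bounded subset of X; in particular every x ∈ A satisfies ‖x‖_X ≤ ‖φ‖_𝓑 + ∫_{t0}^{t0+σ} M(s) dg(s) + ‖φ(0)‖. -/

import Mathlib

open MeasureTheory Filter Set

noncomputable section

/-- `ℝ^n`. -/
abbrev Eu (n : ℕ) := EuclideanSpace ℝ (Fin n)

/-- The history (segment) of `y` at time `t`: `(history y t) θ = y (t + θ)`. -/
def history {E : Type*} (y : ℝ → E) (t : ℝ) : ℝ → E := fun θ => y (t + θ)

/-- `f` is regulated on the interval `[a, b]`: it has a left limit (within the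
interval) at every point of `(a, b]` and a right limit at every point of `[a, b)`. -/
def RegulatedOnIcc {E : Type*} [TopologicalSpace E] (f : ℝ → E) (a b : ℝ) : Prop :=
  (∀ t ∈ Set.Ioc a b, ∃ l : E, Filter.Tendsto f (nhdsWithin t (Set.Ico a t)) (nhds l)) ∧
  (∀ t ∈ Set.Ico a b, ∃ l : E, Filter.Tendsto f (nhdsWithin t (Set.Ioc t b)) (nhds l))

/-- `f` is regulated on `(-∞, 0]`: it has a left limit at every point `t ≤ 0` and
a right limit at every point `t < 0`. -/
def RegulatedOnIic0 {E : Type*} [TopologicalSpace E] (f : ℝ → E) : Prop :=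
  (∀ t ≤ (0:ℝ), ∃ l : E, Filter.Tendsto f (nhdsWithin t (Set.Iio t)) (nhds l)) ∧
  (∀ t < (0:ℝ), ∃ l : E, Filter.Tendsto f (nhdsWithin t (Set.Ioo t 0)) (nhds l))

/-- A phase space: a Banach space `𝓑` of regulated functions `(-∞,0] → E`
(modelled as functions `ℝ → E` whose membership and norm only depend on the
restriction to `(-∞,0]`), satisfying axioms (A1) (completeness), (A2) and (A3). -/
structure PhaseSpace (E : Type*) [NormedAddCommGroup E] [NormedSpace ℝ E] where
  /-- membership in `𝓑` -/
  mem : (ℝ → E) → Prop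
  /-- the norm `‖·‖_𝓑` -/
  nrm : (ℝ → E) → ℝ
  regulated' : ∀ φ, mem φ → RegulatedOnIic0 φ
  zero_mem : mem 0
  add_mem : ∀ φ ψ, mem φ → mem ψ → mem (φ + ψ)
  smul_mem : ∀ (c : ℝ) (φ), mem φ → mem (c • φ)
  mem_congr : ∀ φ ψ, mem φ → Set.EqOn φ ψ (Set.Iic 0) → mem ψ
  nrm_congr : ∀ φ ψ, Set.EqOn φ ψ (Set.Iic 0) → nrm φ = nrm ψ
  nrm_nonneg : ∀ φ, 0 ≤ nrm φ
  nrm_eq_zero : ∀ φ, mem φ → nrm φ = 0 → ∀ θ ≤ (0:ℝ), φ θ = 0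
  nrm_add_le : ∀ φ ψ, nrm (φ + ψ) ≤ nrm φ + nrm ψ
  nrm_smul : ∀ (c : ℝ) (φ), nrm (c • φ) = |c| * nrm φ
  /-- (A1): completeness of `𝓑`. -/
  complete' : ∀ u : ℕ → (ℝ → E), (∀ k, mem (u k)) →
    (∀ ε > (0:ℝ), ∃ N, ∀ m ≥ N, ∀ k ≥ N, nrm (u m - u k) < ε) →
    ∃ φ, mem φ ∧ Filter.Tendsto (fun k => nrm (u k - φ)) Filter.atTop (nhds 0)
  /-- the function `k₁` of axiom (A2) -/
  k1 : ℝ → ℝ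
  /-- the function `k₂` of axiom (A2) -/
  k2 : ℝ → ℝ
  /-- the function `k₃` of axiom (A2) -/
  k3 : ℝ → ℝ
  k1_pos : ∀ t, 0 ≤ t → 0 < k1 t
  k2_pos : ∀ t, 0 ≤ t → 0 < k2 t
  k3_pos : ∀ t, 0 ≤ t → 0 < k3 t
  k1_locBdd : ∀ r, 0 ≤ r → BddAbove (k1 '' Set.Icc 0 r)
  k2_locBdd : ∀ r, 0 ≤ r → BddAbove (k2 '' Set.Icc 0 r)
  k3_locBdd : ∀ r, 0 ≤ r → BddAbove (k3 '' Set.Icc 0 r)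
  /-- Axiom (A2). -/
  axiomA2 : ∀ (t0 σ : ℝ), 0 < σ → ∀ y : ℝ → E,
    RegulatedOnIcc y t0 (t0 + σ) → mem (history y t0) →
    ∀ t ∈ Set.Icc t0 (t0 + σ),
      mem (history y t) ∧
      ‖y t‖ ≤ k1 (t - t0) * nrm (history y t) ∧
      nrm (history y t) ≤ k2 (t - t0) * nrm (history y t0) +
        k3 (t - t0) * sSup ((fun u => ‖y u‖) '' Set.Icc t0 t)
  /-- the function `k` of axiom (A3) -/
  k0 : ℝ → ℝ
  k0_cont : Continuous k0
  k0_zero : k0 0 = 0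
  /-- Axiom (A3): for `t ≥ 0`, any function `ψ` built from `φ ∈ 𝓑` as
  `ψ 0 = φ 0`, `ψ θ = φ(0⁻)` for `-t ≤ θ < 0` and `ψ θ = φ (t + θ)` for `θ < -t`
  belongs to `𝓑` with `‖ψ‖_𝓑 ≤ (1 + k t) ‖φ‖_𝓑`. -/
  axiomA3 : ∀ t, 0 ≤ t → ∀ φ : ℝ → E, mem φ → ∀ φ0 : E,
    Filter.Tendsto φ (nhdsWithin 0 (Set.Iio 0)) (nhds φ0) →
    ∀ ψ : ℝ → E, ψ 0 = φ 0 → (∀ θ, -t ≤ θ → θ < 0 → ψ θ = φ0) →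
    (∀ θ, θ < -t → ψ θ = φ (t + θ)) →
    mem ψ ∧ nrm ψ ≤ (1 + k0 t) * nrm φ

/-- Membership in the space `X` of functions `(-∞, t0+σ] → E` with `x_{t0} ∈ 𝓑`
and `x` regulated on `[t0, t0+σ]`. -/
def memX {E : Type*} [NormedAddCommGroup E] [NormedSpace ℝ E]
    (P : PhaseSpace E) (t0 σ : ℝ) (x : ℝ → E) : Prop :=
  P.mem (history x t0) ∧ RegulatedOnIcc x t0 (t0 + σ)

/-- The norm `‖x‖_X = ‖x_{t0}‖_𝓑 + sup_{u ∈ [t0, t0+σ]} ‖x u‖`. -/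
def normX {E : Type*} [NormedAddCommGroup E] [NormedSpace ℝ E]
    (P : PhaseSpace E) (t0 σ : ℝ) (x : ℝ → E) : ℝ :=
  P.nrm (history x t0) + sSup ((fun u => ‖x u‖) '' Set.Icc t0 (t0 + σ))

/-- Membership in the set `A = {x ∈ X : x_{t0} = φ and
‖x t - φ 0‖ ≤ ∫_{t0}^{t} M dg for all t ∈ [t0, t0+σ]}`. -/
def memA {E : Type*} [NormedAddCommGroup E] [NormedSpace ℝ E]
    (P : PhaseSpace E) (t0 σ : ℝ) (φ : ℝ → E) (M : ℝ → ℝ) (μ : Measure ℝ)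
    (x : ℝ → E) : Prop :=
  memX P t0 σ x ∧ (∀ θ ≤ (0:ℝ), x (t0 + θ) = φ θ) ∧
  ∀ t ∈ Set.Icc t0 (t0 + σ), ‖x t - φ 0‖ ≤ ∫ s in Set.Ico t0 t, M s ∂μ

/-- The operator `Γ`. -/
def Gam {E : Type*} [NormedAddCommGroup E] [NormedSpace ℝ E] [CompleteSpace E]
    (t0 : ℝ) (φ : ℝ → E) (f : ℝ → (ℝ → E) → E) (ρ : ℝ → (ℝ → E) → ℝ)
    (μ : Measure ℝ) (x : ℝ → E) : ℝ → E := fun t =>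
  if t ≤ t0 then φ (t - t0)
  else x t0 + ∫ s in Set.Ico t0 t, f s (history x (ρ s (history x s))) ∂μ

/-!
Elements of `A` share the initial history `φ` and satisfy the pointwise bounds
`‖x t - φ 0‖ ≤ ∫_{[t0,t)} M dμ`; both conditions survive convex combinations. Regulated
functions are bounded on `[t0, t0 + σ]`, so convergence in `‖·‖_X` forces pointwise convergence
there and the pointwise bounds pass to the limit. For the initial history, `‖(u k - x)_{t0}‖_𝓑`
does not depend on `k` (all `u k` start with `φ`) and tends to `0`, hence vanishes.
Boundedness is `‖x t‖ ≤ ‖x t - φ 0‖ + ‖φ 0‖` together with monotonicity of `∫ M dμ` for `M ≥ 0`.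
-/
open Topology

section Regulated

variable {E : Type*} [NormedAddCommGroup E] {f : ℝ → E} {a b : ℝ}

lemma RegulatedOnIcc.isBoundedUnder_norm (hf : RegulatedOnIcc f a b) {t : ℝ}
    (ht : t ∈ Icc a b) : IsBoundedUnder (· ≤ ·) (𝓝[Icc a b] t) (‖f ·‖) := by
  have left : IsBoundedUnder (· ≤ ·) (𝓝[Ico a t] t) (‖f ·‖) := by
    rcases ht.1.eq_or_lt with rfl | hat
    · exact isBoundedUnder_of_eventually_le (a := 0) (by simp)
    · obtain ⟨l, hl⟩ := hf.1 t ⟨hat, ht.2⟩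
      exact hl.norm.isBoundedUnder_le
  have right : IsBoundedUnder (· ≤ ·) (𝓝[Ioc t b] t) (‖f ·‖) := by
    rcases ht.2.eq_or_lt with rfl | htb
    · exact isBoundedUnder_of_eventually_le (a := 0) (by simp)
    · obtain ⟨l, hl⟩ := hf.2 t ⟨ht.1, htb⟩
      exact hl.norm.isBoundedUnder_le
  have center : IsBoundedUnder (· ≤ ·) (pure t) (‖f ·‖) :=
    isBoundedUnder_of_eventually_le (eventually_pure.2 le_rfl)
  rw [← Ico_union_Icc_eq_Icc ht.1 ht.2, ← Ioc_insert_left ht.2, nhdsWithin_union,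
    nhdsWithin_insert, IsBoundedUnder, Filter.map_sup, Filter.map_sup]
  exact isBounded_sup left (isBounded_sup center right)

lemma RegulatedOnIcc.bddAbove_norm_image (hf : RegulatedOnIcc f a b) :
    BddAbove ((‖f ·‖) '' Icc a b) := by
  refine isCompact_Icc.induction_on (p := fun s => BddAbove ((‖f ·‖) '' s)) (by simp)
    (fun s t hst h => h.mono (image_mono hst))
    (fun s t hs ht => by simpa only [image_union] using hs.union ht) fun t ht => ?_
  obtain ⟨C, hC⟩ := (hf.isBoundedUnder_norm ht).eventually_le
  exact ⟨{s | ‖f s‖ ≤ C}, hC, C, by rintro _ ⟨s, hs, rfl⟩; exact hs⟩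

lemma RegulatedOnIcc.comp₂ {F G : Type*} [TopologicalSpace F] [TopologicalSpace G]
    {f : ℝ → E} {g : ℝ → F} (h : E → F → G) (hh : Continuous (Function.uncurry h))
    (hf : RegulatedOnIcc f a b) (hg : RegulatedOnIcc g a b) :
    RegulatedOnIcc (fun t => h (f t) (g t)) a b := by
  constructor
  · intro t ht
    obtain ⟨lf, hlf⟩ := hf.1 t ht
    obtain ⟨lg, hlg⟩ := hg.1 t ht
    exact ⟨h lf lg, (hh.tendsto (lf, lg)).comp (hlf.prodMk_nhds hlg)⟩
  · intro t ht
    obtain ⟨lf, hlf⟩ := hf.2 t ht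
    obtain ⟨lg, hlg⟩ := hg.2 t ht
    exact ⟨h lf lg, (hh.tendsto (lf, lg)).comp (hlf.prodMk_nhds hlg)⟩

end Regulated

lemma history_sub {E : Type*} [Sub E] (x y : ℝ → E) (t : ℝ) :
    history (x - y) t = history x t - history y t :=
  rfl

section SetA

variable {E : Type*} [NormedAddCommGroup E] [NormedSpace ℝ E] (P : PhaseSpace E)
  {t0 σ : ℝ} {φ : ℝ → E} {M : ℝ → ℝ} {μ : Measure ℝ}

lemma PhaseSpace.mem_sub {ψ χ : ℝ → E} (hψ : P.mem ψ) (hχ : P.mem χ) : P.mem (ψ - χ) := by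
  simpa [sub_eq_add_neg] using P.add_mem _ _ hψ (P.smul_mem (-1) χ hχ)

lemma PhaseSpace.nrm_history_le_normX (x : ℝ → E) :
    P.nrm (history x t0) ≤ normX P t0 σ x :=
  le_add_of_nonneg_right (Real.sSup_nonneg (by rintro _ ⟨u, -, rfl⟩; exact norm_nonneg _))

lemma PhaseSpace.norm_le_normX {x : ℝ → E} (hx : RegulatedOnIcc x t0 (t0 + σ)) {t : ℝ}
    (ht : t ∈ Icc t0 (t0 + σ)) : ‖x t‖ ≤ normX P t0 σ x :=
  (le_csSup hx.bddAbove_norm_image ⟨t, ht, rfl⟩).trans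
    (le_add_of_nonneg_left (P.nrm_nonneg _))

lemma memA.smul_add_one_sub_smul {x y : ℝ → E} (hx : memA P t0 σ φ M μ x)
    (hy : memA P t0 σ φ M μ y) {ξ : ℝ} (hξ : ξ ∈ Icc (0 : ℝ) 1) :
    memA P t0 σ φ M μ (ξ • x + (1 - ξ) • y) := by
  have hinit : ∀ θ ≤ (0 : ℝ), (ξ • x + (1 - ξ) • y) (t0 + θ) = φ θ := fun θ hθ => by
    simp only [Pi.add_apply, Pi.smul_apply, hx.2.1 θ hθ, hy.2.1 θ hθ, ← add_smul,
      add_sub_cancel, one_smul]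
  refine ⟨⟨P.mem_congr _ _ hx.1.1 fun θ hθ => (hx.2.1 θ hθ).trans (hinit θ hθ).symm,
    hx.1.2.comp₂ (fun a b => ξ • a + (1 - ξ) • b) (by fun_prop) hy.1.2⟩, hinit, fun t ht => ?_⟩
  have hξ' : 0 ≤ 1 - ξ := sub_nonneg.2 hξ.2
  calc ‖(ξ • x + (1 - ξ) • y) t - φ 0‖
      = ‖ξ • (x t - φ 0) + (1 - ξ) • (y t - φ 0)‖ := by
        congr 1; simp only [Pi.add_apply, Pi.smul_apply]; module
    _ ≤ ξ * ‖x t - φ 0‖ + (1 - ξ) * ‖y t - φ 0‖ := by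
        refine (norm_add_le _ _).trans_eq ?_
        rw [norm_smul, norm_smul, Real.norm_of_nonneg hξ.1, Real.norm_of_nonneg hξ']
    _ ≤ ξ * (∫ s in Ico t0 t, M s ∂μ) + (1 - ξ) * ∫ s in Ico t0 t, M s ∂μ :=
      add_le_add (mul_le_mul_of_nonneg_left (hx.2.2 t ht) hξ.1)
        (mul_le_mul_of_nonneg_left (hy.2.2 t ht) hξ')
    _ = ∫ s in Ico t0 t, M s ∂μ := by ring

lemma memA_of_tendsto_normX {u : ℕ → ℝ → E} {x : ℝ → E} (hu : ∀ k, memA P t0 σ φ M μ (u k))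
    (hx : memX P t0 σ x) (hlim : Tendsto (fun k => normX P t0 σ (u k - x)) atTop (𝓝 0)) :
    memA P t0 σ φ M μ x := by
  have hconst : ∀ k, P.nrm (history (u k - x) t0) = P.nrm (history (u 0 - x) t0) := fun k =>
    P.nrm_congr _ _ fun θ hθ => by
      simp only [history, Pi.sub_apply, (hu k).2.1 θ hθ, (hu 0).2.1 θ hθ]
  have hzero : P.nrm (history (u 0 - x) t0) = 0 :=
    tendsto_nhds_unique tendsto_const_nhds <| (squeeze_zero (fun k => P.nrm_nonneg _)
      (fun k => P.nrm_history_le_normX (σ := σ) _) hlim).congr hconst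
  have hinit : ∀ θ ≤ (0 : ℝ), x (t0 + θ) = φ θ := fun θ hθ => by
    have h := P.nrm_eq_zero _ (history_sub (u 0) x t0 ▸ P.mem_sub (hu 0).1.1 hx.1) hzero θ hθ
    rw [history, Pi.sub_apply, sub_eq_zero, (hu 0).2.1 θ hθ] at h
    exact h.symm
  refine ⟨hx, hinit, fun t ht => ?_⟩
  have hbound : ∀ k, ‖x t - φ 0‖ ≤ normX P t0 σ (u k - x) + ∫ s in Ico t0 t, M s ∂μ := by
    intro k
    have hreg : RegulatedOnIcc (u k - x) t0 (t0 + σ) :=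
      (hu k).1.2.comp₂ (fun a b : E => a - b) continuous_sub hx.2
    calc ‖x t - φ 0‖ ≤ ‖(u k - x) t‖ + ‖u k t - φ 0‖ := by
          rw [Pi.sub_apply, norm_sub_rev (u k t)]; exact norm_sub_le_norm_sub_add_norm_sub _ _ _
      _ ≤ _ := add_le_add (P.norm_le_normX hreg ht) ((hu k).2.2 t ht)
  simpa using ge_of_tendsto' (hlim.add_const _) hbound

lemma normX_le_of_memA (hM0 : ∀ s, 0 ≤ M s) (hMint : IntegrableOn M (Icc t0 (t0 + σ)) μ)
    {x : ℝ → E} (hx : memA P t0 σ φ M μ x) :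
    normX P t0 σ x ≤ P.nrm φ + (∫ s in Ico t0 (t0 + σ), M s ∂μ) + ‖φ 0‖ := by
  have hsup : sSup ((‖x ·‖) '' Icc t0 (t0 + σ)) ≤ (∫ s in Ico t0 (t0 + σ), M s ∂μ) + ‖φ 0‖ := by
    refine Real.sSup_le ?_ (add_nonneg (integral_nonneg hM0) (norm_nonneg _))
    rintro _ ⟨t, ht, rfl⟩
    calc ‖x t‖ ≤ ‖x t - φ 0‖ + ‖φ 0‖ := norm_le_norm_sub_add _ _
      _ ≤ (∫ s in Ico t0 t, M s ∂μ) + ‖φ 0‖ := by gcongr; exact hx.2.2 t ht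
      _ ≤ (∫ s in Ico t0 (t0 + σ), M s ∂μ) + ‖φ 0‖ :=
          (add_le_add_iff_right _).2 <| setIntegral_mono_set (hMint.mono_set Ico_subset_Icc_self)
            (.of_forall hM0) (Ico_subset_Ico_right ht.2).eventuallyLE
  rw [normX, P.nrm_congr (history x t0) φ hx.2.1, add_assoc]
  exact add_le_add_right hsup _

end SetA

theorem A_convex_closed_bounded_general
    (n : ℕ) (t0 σ : ℝ)
    (P : PhaseSpace (Eu n))
    (φ : ℝ → Eu n)
    (μ : Measure ℝ)
    (M : ℝ → ℝ) (hM0 : ∀ s, 0 ≤ M s)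
    (hMint : MeasureTheory.IntegrableOn M (Set.Icc t0 (t0 + σ)) μ) :
    -- `A` is convex
    (∀ x y : ℝ → Eu n, memA P t0 σ φ M μ x → memA P t0 σ φ M μ y →
      ∀ ξ ∈ Set.Icc (0:ℝ) 1, memA P t0 σ φ M μ (ξ • x + (1 - ξ) • y)) ∧
    -- `A` is closed in `X`
    (∀ u : ℕ → ℝ → Eu n, (∀ k, memA P t0 σ φ M μ (u k)) →
      ∀ x : ℝ → Eu n, memX P t0 σ x →
        Filter.Tendsto (fun k => normX P t0 σ (u k - x)) Filter.atTop (nhds 0) →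
        memA P t0 σ φ M μ x) ∧
    -- `A` is bounded
    (∀ x : ℝ → Eu n, memA P t0 σ φ M μ x →
      normX P t0 σ x ≤ P.nrm φ + (∫ s in Set.Ico t0 (t0 + σ), M s ∂μ) + ‖φ 0‖) :=
  ⟨fun _ _ hx hy _ hξ => hx.smul_add_one_sub_smul P hy hξ,
    fun _ hu _ hx hlim => memA_of_tendsto_normX P hu hx hlim,
    fun _ hx => normX_le_of_memA P hM0 hMint hx⟩

/-- the set `A` is convex, closed and bounded in `X`; every
`x ∈ A` satisfies `‖x‖_X ≤ ‖φ‖_𝓑 + ∫_{t0}^{t0+σ} M dg + ‖φ 0‖`. -/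
theorem A_convex_closed_bounded
    (n : ℕ) (t0 σ : ℝ) (hσ : 0 < σ)
    (P : PhaseSpace (Eu n))
    (φ : ℝ → Eu n) (hφ : P.mem φ)
    (g : ℝ → ℝ)
    (hg_mono : MonotoneOn g (Set.Icc t0 (t0 + σ)))
    (hg_lc : ∀ t ∈ Set.Ioc t0 (t0 + σ),
      Filter.Tendsto g (nhdsWithin t (Set.Ico t0 t)) (nhds (g t)))
    (μ : Measure ℝ)
    (hμ : ∀ a b : ℝ, t0 ≤ a → a ≤ b → b ≤ t0 + σ →
      μ (Set.Ico a b) = ENNReal.ofReal (g b - g a))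
    (M : ℝ → ℝ) (hM0 : ∀ s, 0 ≤ M s)
    (hMint : MeasureTheory.IntegrableOn M (Set.Icc t0 (t0 + σ)) μ) :
    -- `A` is convex
    (∀ x y : ℝ → Eu n, memA P t0 σ φ M μ x → memA P t0 σ φ M μ y →
      ∀ ξ ∈ Set.Icc (0:ℝ) 1, memA P t0 σ φ M μ (ξ • x + (1 - ξ) • y)) ∧
    -- `A` is closed in `X`
    (∀ u : ℕ → ℝ → Eu n, (∀ k, memA P t0 σ φ M μ (u k)) →
      ∀ x : ℝ → Eu n, memX P t0 σ x →
        Filter.Tendsto (fun k => normX P t0 σ (u k - x)) Filter.atTop (nhds 0) →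
        memA P t0 σ φ M μ x) ∧
    -- `A` is bounded
    (∀ x : ℝ → Eu n, memA P t0 σ φ M μ x →
      normX P t0 σ x ≤ P.nrm φ + (∫ s in Set.Ico t0 (t0 + σ), M s ∂μ) + ‖φ 0‖) :=
  A_convex_closed_bounded_general n t0 σ P φ μ M hM0 hMint
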